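/- arXiv:1511.00003 — 2 statements merged into one kernel-verified Lean document; each statement's English description precedes it below -/
import Mathlib

section
/- Let V be a regular potential and let ψ be the solution of the gradient flow dψ_t = -V'(ψ_t)dt with ψ_0 = x₀ ∈ ℝ \ {0}. Then there exists a constant c̃ ≠ 0 such that lim_{t→+∞} e^{V''(0)t} ψ_t = c̃. -/
/-!
Reflecting `V` and `ψ` reduces to `x₀ > 0`. Since `0` is an equilibrium of the locally Lipschitz
field `-V'`, uniqueness of solutions keeps `ψ` positive; as `V' > 0` on `(0, ∞)`, `ψ` decreases
to `0`, and since `V'(x) ≥ V''(0) x / 2` near `0⁺` it does so exponentially fast. Writing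
`λ = V''(0)`, the derivative of `λ t + log ψ_t` is `-(V'(ψ_t) - λ ψ_t) / ψ_t = O(ψ_t)`,
which is integrable, so `λ t + log ψ_t` converges and `e^{λ t} ψ_t → c̃ > 0`.
-/

open Filter Set Topology Asymptotics Real

theorem IsPreconnected.forall_pos_of_ne_zero {X : Type*} [TopologicalSpace X] {s : Set X}
    {f : X → ℝ} {a : X} (hs : IsPreconnected s) (hf : ContinuousOn f s)
    (hne : ∀ x ∈ s, f x ≠ 0) (ha : a ∈ s) (hfa : 0 < f a) : ∀ x ∈ s, 0 < f x := by
  intro x hx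
  by_contra! hfx
  obtain ⟨y, hy, hfy⟩ := hs.intermediate_value hx ha hf ⟨hfx, hfa.le⟩
  exact hne y hy hfy

theorem antitoneOn_Ici_of_hasDerivAt_nonpos {g g' : ℝ → ℝ} {T : ℝ}
    (hg : ∀ t, T ≤ t → HasDerivAt g (g' t) t) (hg' : ∀ t, T < t → g' t ≤ 0) :
    AntitoneOn g (Ici T) :=
  antitoneOn_of_hasDerivWithinAt_nonpos (convex_Ici T)
    (fun t ht => (hg t ht).continuousAt.continuousWithinAt)
    (fun t ht => (hg t (interior_Ici.subset ht).le).hasDerivWithinAt)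
    (fun t ht => hg' t (interior_Ici.subset ht))

theorem HasDerivAt.eventually_mul_sub_lt_sub {f : ℝ → ℝ} {f' a x : ℝ} (hf : HasDerivAt f f' x)
    (ha : a < f') : ∀ᶠ y in 𝓝[>] x, a * (y - x) < f y - f x := by
  filter_upwards [(hf.tendsto_slope.mono_left (nhdsGT_le_nhdsNE x)).eventually (lt_mem_nhds ha),
    self_mem_nhdsWithin] with y hy hxy
  rw [slope_def_field, lt_div_iff₀ (sub_pos.2 hxy)] at hy
  exact hy

theorem isBigO_sub_sub_deriv_mul_sub_sq {f : ℝ → ℝ} {a : ℝ} (hf : Differentiable ℝ f)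
    (hf' : DifferentiableAt ℝ (deriv f) a) :
    (fun x => f x - f a - deriv f a * (x - a)) =O[𝓝 a] fun x => (x - a) ^ 2 := by
  obtain ⟨c, hc0, hc⟩ := hf'.isBigO_sub.exists_nonneg
  obtain ⟨δ, hδ, hball⟩ := Metric.eventually_nhds_iff_ball.1 hc.bound
  refine IsBigO.of_bound c ?_
  filter_upwards [Metric.ball_mem_nhds a hδ] with x hx
  have hsub : uIcc a x ⊆ Metric.ball a δ :=
    (convex_ball a δ).ordConnected.uIcc_subset (Metric.mem_ball_self hδ) hx
  have hderiv : ∀ y ∈ uIcc a x, HasDerivWithinAt (fun x => f x - f a - deriv f a * (x - a))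
      (deriv f y - deriv f a) (uIcc a x) y := fun y _ => by
    simpa using (((hf y).hasDerivAt.sub_const (f a)).fun_sub
      (((hasDerivAt_id y).sub_const a).const_mul (deriv f a))).hasDerivWithinAt
  have hbound : ∀ y ∈ uIcc a x, ‖deriv f y - deriv f a‖ ≤ c * |x - a| := fun y hy =>
    (hball y (hsub hy)).trans (mul_le_mul_of_nonneg_left (abs_sub_left_of_mem_uIcc hy) hc0)
  have := (convex_uIcc a x).norm_image_sub_le_of_norm_hasDerivWithin_le hderiv hbound
    left_mem_uIcc right_mem_uIcc
  simpa [sq, abs_mul, mul_assoc] using this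

theorem ODE_solution_ne_equilibrium {E : Type*} [NormedAddCommGroup E] [NormedSpace ℝ E]
    {v : E → E} {ψ : ℝ → E} {e : E} (hv : LocallyLipschitz v) (he : v e = 0)
    (hψ : ∀ t, 0 ≤ t → HasDerivAt ψ (v (ψ t)) t) (hψ0 : ψ 0 ≠ e) :
    ∀ t, 0 ≤ t → ψ t ≠ e := by
  intro t ht hψt
  have hψc : ContinuousOn ψ (Icc 0 t) := fun s hs => (hψ s hs.1).continuousAt.continuousWithinAt
  obtain ⟨K, hK⟩ := hv.locallyLipschitzOn.exists_lipschitzOnWith_of_compact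
    (isCompact_Icc.image_of_continuousOn hψc)
  have he_mem : e ∈ ψ '' Icc 0 t := ⟨t, right_mem_Icc.2 ht, hψt⟩
  refine hψ0 (ODE_solution_unique_of_mem_Icc_left (v := fun _ => v) (s := fun _ => ψ '' Icc 0 t)
    (fun _ _ => hK) hψc (fun s hs => (hψ s hs.1.le).hasDerivWithinAt)
    (fun s hs => mem_image_of_mem ψ (Ioc_subset_Icc_self hs)) continuousOn_const
    (fun _ _ => he ▸ hasDerivWithinAt_const _ _ e) (fun _ _ => he_mem) hψt (left_mem_Icc.2 ht))

section GradientFlow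

variable {f ψ : ℝ → ℝ}

theorem tendsto_zero_of_hasDerivAt_neg (hf : Continuous f) (hfpos : ∀ x, 0 < x → 0 < f x)
    (hψpos : ∀ t, 0 ≤ t → 0 < ψ t) (hψ : ∀ t, 0 ≤ t → HasDerivAt ψ (-f (ψ t)) t) :
    Tendsto ψ atTop (𝓝 0) := by
  have hanti : AntitoneOn ψ (Ici 0) := antitoneOn_Ici_of_hasDerivAt_nonpos hψ
    fun t ht => neg_nonpos.2 (hfpos _ (hψpos t ht.le)).le
  refine tendsto_order.2 ⟨fun b hb => eventually_atTop.2 ⟨0, fun t ht => hb.trans (hψpos t ht)⟩,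
    fun η hη => ?_⟩
  suffices ∃ t₁, 0 ≤ t₁ ∧ ψ t₁ < η by
    obtain ⟨t₁, ht₁, hψt₁⟩ := this
    exact eventually_atTop.2 ⟨t₁, fun t ht => (hanti ht₁ (ht₁.trans ht) ht).trans_lt hψt₁⟩
  by_contra! hge
  -- `f ≥ f z > 0` on `[η, ψ 0]`, which contains the range of `ψ`, so `ψ` decreases linearly.
  obtain ⟨z, hz, hzmin⟩ := isCompact_Icc.exists_isMinOn (nonempty_Icc.2 (hge 0 le_rfl))
    hf.continuousOn
  have hm : 0 < f z := hfpos z (hη.trans_le hz.1)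
  have hlin : AntitoneOn (fun t => ψ t + f z * t) (Ici 0) :=
    antitoneOn_Ici_of_hasDerivAt_nonpos
      (fun t ht => (hψ t ht).add ((hasDerivAt_id t).const_mul (f z)))
      fun t ht => by
        have : f z ≤ f (ψ t) := hzmin ⟨hge t ht.le, hanti self_mem_Ici ht.le ht.le⟩
        linarith
  have ht₁ : 0 ≤ ψ 0 / f z := div_nonneg (hψpos 0 le_rfl).le hm.le
  have h := hlin self_mem_Ici ht₁ ht₁
  simp only [mul_div_cancel₀ _ hm.ne', mul_zero, add_zero] at h
  linarith [hψpos _ ht₁]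

theorem isBigO_exp_neg_of_hasDerivAt_neg {a : ℝ} (hψpos : ∀ t, 0 ≤ t → 0 < ψ t)
    (hψ : ∀ t, 0 ≤ t → HasDerivAt ψ (-f (ψ t)) t) (hlim : Tendsto ψ atTop (𝓝 0))
    (hf : ∀ᶠ x in 𝓝[>] 0, a * x ≤ f x) : ψ =O[atTop] fun t => exp (-a * t) := by
  have hlim' : Tendsto ψ atTop (𝓝[>] 0) :=
    tendsto_nhdsWithin_iff.2 ⟨hlim, eventually_atTop.2 ⟨0, hψpos⟩⟩
  obtain ⟨T, hT⟩ := eventually_atTop.1 ((eventually_ge_atTop 0).and (hlim'.eventually hf))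
  have hanti : AntitoneOn (fun t => exp (a * t) * ψ t) (Ici T) :=
    antitoneOn_Ici_of_hasDerivAt_nonpos
      (fun t ht => ((hasDerivAt_id t).const_mul a).exp.mul (hψ t (hT t ht).1))
      fun t ht => by
        simp only [id, mul_one]
        linarith [mul_le_mul_of_nonneg_left (hT t ht.le).2 (exp_pos (a * t)).le]
  refine IsBigO.of_bound (exp (a * T) * ψ T) ?_
  filter_upwards [eventually_ge_atTop T] with t ht
  rw [norm_of_nonneg (hψpos t ((hT T le_rfl).1.trans ht)).le, norm_of_nonneg (exp_pos _).le]
  calc ψ t = exp (-a * t) * (exp (a * t) * ψ t) := by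
        rw [← mul_assoc, ← exp_add, neg_mul, neg_add_cancel, exp_zero, one_mul]
    _ ≤ exp (-a * t) * (exp (a * T) * ψ T) :=
        mul_le_mul_of_nonneg_left (hanti self_mem_Ici ht ht) (exp_pos _).le
    _ = _ := mul_comm _ _

theorem exists_tendsto_exp_mul_of_hasDerivAt_neg {l a : ℝ} (hf : Continuous f)
    (hO : (fun x => f x - l * x) =O[𝓝 0] fun x => x ^ 2)
    (hψpos : ∀ t, 0 ≤ t → 0 < ψ t) (hψ : ∀ t, 0 ≤ t → HasDerivAt ψ (-f (ψ t)) t)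
    (hlim : Tendsto ψ atTop (𝓝 0)) (ha : 0 < a) (hdecay : ψ =O[atTop] fun t => exp (-a * t)) :
    ∃ c, 0 < c ∧ Tendsto (fun t => exp (l * t) * ψ t) atTop (𝓝 c) := by
  set w' : ℝ → ℝ := fun t => -((f (ψ t) - l * ψ t) * (ψ t)⁻¹)
  have hw : ∀ t ∈ Ioi (0 : ℝ), HasDerivAt (fun t => l * t + log (ψ t)) (w' t) t := fun t ht => by
    refine (((hasDerivAt_id' t).const_mul l).fun_add
      ((hψ t ht.le).log (hψpos t ht.le).ne')).congr_deriv ?_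
    simp only [w']
    field_simp [(hψpos t ht.le).ne']
    ring
  -- `w'` is `O(ψ)` by the Taylor expansion of `f` at `0`, hence exponentially small.
  have hw'O : w' =O[atTop] fun t => exp (-a * t) := by
    refine IsBigO.trans ?_ hdecay
    refine ((hO.comp_tendsto hlim).mul (isBigO_refl (fun t => (ψ t)⁻¹) atTop)).neg_left.congr_right
      fun t => ?_
    simp only [Function.comp_apply, sq, mul_self_mul_inv]
  have hψc : ContinuousOn ψ (Ici 0) := fun t ht => (hψ t ht).continuousAt.continuousWithinAt
  have hw'c : ContinuousOn w' (Ici 0) :=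
    (((hf.comp_continuousOn hψc).sub (continuousOn_const.mul hψc)).mul
      (hψc.inv₀ fun t ht => (hψpos t ht).ne')).neg
  have hlog := MeasureTheory.tendsto_limUnder_of_hasDerivAt_of_integrableOn_Ioi hw
    (integrable_of_isBigO_exp_neg ha hw'c hw'O)
  refine ⟨_, exp_pos _, ((continuous_exp.tendsto _).comp hlog).congr' ?_⟩
  filter_upwards [eventually_ge_atTop 0] with t ht
  simp [exp_add, exp_log (hψpos t ht)]

end GradientFlow

theorem exists_pos_tendsto_exp_deriv_mul {f ψ : ℝ → ℝ} (hf : ContDiff ℝ 2 f)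
    (hf0 : ∀ x, f x = 0 ↔ x = 0) (hf'0 : 0 < deriv f 0) (hψ0 : 0 < ψ 0)
    (hψ : ∀ t, 0 ≤ t → HasDerivAt ψ (-f (ψ t)) t) :
    ∃ c, 0 < c ∧ Tendsto (fun t => exp (deriv f 0 * t) * ψ t) atTop (𝓝 c) := by
  have hfd : Differentiable ℝ f := hf.differentiable two_ne_zero
  have hf_zero : f 0 = 0 := (hf0 0).2 rfl
  have hlow : ∀ᶠ x in 𝓝[>] 0, deriv f 0 / 2 * x ≤ f x := by
    filter_upwards [(hfd 0).hasDerivAt.eventually_mul_sub_lt_sub (half_lt_self hf'0)] with x hx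
    simpa [hf_zero] using hx.le
  have hfpos : ∀ x, 0 < x → 0 < f x := by
    obtain ⟨x₁, hx₁, hx₁pos⟩ := (hlow.and self_mem_nhdsWithin).exists
    exact isPreconnected_Ioi.forall_pos_of_ne_zero hfd.continuous.continuousOn
      (fun x hx => mt (hf0 x).1 hx.ne') hx₁pos
      (by have : 0 < deriv f 0 / 2 * x₁ := mul_pos (half_pos hf'0) hx₁pos; linarith)
  have hψpos : ∀ t, 0 ≤ t → 0 < ψ t := by
    have hne := ODE_solution_ne_equilibrium (hf.neg.of_le one_le_two).locallyLipschitz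
      (by simp [hf_zero]) hψ hψ0.ne'
    exact isPreconnected_Ici.forall_pos_of_ne_zero
      (fun t ht => (hψ t ht).continuousAt.continuousWithinAt) hne self_mem_Ici hψ0
  have hlim := tendsto_zero_of_hasDerivAt_neg hfd.continuous hfpos hψpos hψ
  have hO : (fun x => f x - deriv f 0 * x) =O[𝓝 0] fun x => x ^ 2 := by
    simpa [hf_zero] using isBigO_sub_sub_deriv_mul_sub_sq hfd
      ((hf.deriv' (n := 1)).differentiable one_ne_zero 0)
  exact exists_tendsto_exp_mul_of_hasDerivAt_neg hfd.continuous hO hψpos hψ hlim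
    (half_pos hf'0) (isBigO_exp_neg_of_hasDerivAt_neg hψpos hψ hlim hlow)

theorem exists_ne_zero_tendsto_exp_deriv_mul {f ψ : ℝ → ℝ} (hf : ContDiff ℝ 2 f)
    (hf0 : ∀ x, f x = 0 ↔ x = 0) (hf'0 : 0 < deriv f 0) (hψ0 : ψ 0 ≠ 0)
    (hψ : ∀ t, 0 ≤ t → HasDerivAt ψ (-f (ψ t)) t) :
    ∃ c, c ≠ 0 ∧ Tendsto (fun t => exp (deriv f 0 * t) * ψ t) atTop (𝓝 c) := by
  rcases hψ0.lt_or_gt with hneg | hpos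
  · -- `-ψ` is the flow of the reflected field `x ↦ -f (-x)`, which has the same slope at `0`.
    have hslope : deriv (fun x => -f (-x)) 0 = deriv f 0 := by simp [deriv_comp_neg]
    obtain ⟨c, hc, hlim⟩ := exists_pos_tendsto_exp_deriv_mul (f := fun x => -f (-x))
      (ψ := fun t => -ψ t) (hf.comp contDiff_neg).neg (by simpa using fun x => hf0 (-x))
      (hslope ▸ hf'0) (neg_pos.2 hneg) fun t ht => by simpa using (hψ t ht).fun_neg
    refine ⟨-c, neg_ne_zero.2 hc.ne', ?_⟩
    simpa [hslope] using hlim.neg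
  · obtain ⟨c, hc, hlim⟩ := exists_pos_tendsto_exp_deriv_mul hf hf0 hf'0 hpos hψ
    exact ⟨c, hc.ne', hlim⟩

theorem exp_mul_flow_tendsto_const_general
    (V ψ : ℝ → ℝ) (x₀ : ℝ)
    (hV : ContDiff ℝ 3 V)
    (hcrit : ∀ x : ℝ, deriv V x = 0 ↔ x = 0)
    (hV''0 : 0 < deriv (deriv V) 0)
    (hx₀ : x₀ ≠ 0)
    (hψ0 : ψ 0 = x₀)
    (hψ : ∀ t : ℝ, 0 ≤ t → HasDerivAt ψ (-(deriv V (ψ t))) t) :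
    ∃ c : ℝ, c ≠ 0 ∧
      Tendsto (fun t : ℝ => Real.exp (deriv (deriv V) 0 * t) * ψ t) atTop (nhds c) :=
  exists_ne_zero_tendsto_exp_deriv_mul (hV.deriv' (n := 2)) hcrit hV''0 (hψ0 ▸ hx₀) hψ

/-- For a regular potential `V` and the gradient flow `ψ` started at
`x₀ ≠ 0`, there is a constant `c̃ ≠ 0` with `e^{V''(0) t} ψ t → c̃` as `t → +∞`. -/
theorem exp_mul_flow_tendsto_const
    (V ψ : ℝ → ℝ) (x₀ : ℝ)
    (hV : ContDiff ℝ 3 V)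
    (hV0 : V 0 = 0)
    (hcrit : ∀ x : ℝ, deriv V x = 0 ↔ x = 0)
    (hV''0 : 0 < deriv (deriv V) 0)
    (hcoercive : Tendsto V (Filter.cocompact ℝ) atTop)
    (hx₀ : x₀ ≠ 0)
    (hψ0 : ψ 0 = x₀)
    (hψ : ∀ t : ℝ, 0 ≤ t → HasDerivAt ψ (-(deriv V (ψ t))) t) :
    ∃ c : ℝ, c ≠ 0 ∧
      Tendsto (fun t : ℝ => Real.exp (deriv (deriv V) 0 * t) * ψ t) atTop (nhds c) :=
  exp_mul_flow_tendsto_const_general V ψ x₀ hV hcrit hV''0 hx₀ hψ0 hψ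
end

section
/- Let V be a coercive regular potential and let V̂ be a smooth coercive regular potential with V̂''(0) = V''(0). For ε > 0 let μ^ε be the probability measure on ℝ with density e^{−(2/ε)V(x)}/M^ε (with M^ε = ∫_ℝ e^{−(2/ε)V(z)} dz) and let μ̂^ε be the probability measure with density e^{−(2/ε)V̂(x)}/M̂^ε (with M̂^ε = ∫_ℝ e^{−(2/ε)V̂(z)} dz). Then lim_{ε→0} ‖μ^ε − μ̂^ε‖ = 0, where ‖·‖ denotes the total variation distance. -/
open Filter MeasureTheory

/-- Total variation distance between two measures on `ℝ`:
`sup_A |P(A) - Q(A)|` over measurable sets `A`. -/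
noncomputable def tvDist (P Q : Measure ℝ) : ℝ :=
  ⨆ A : {s : Set ℝ // MeasurableSet s}, |(P A.1).toReal - (Q A.1).toReal|

/-!
Substituting `x = √ε y` turns both Gibbs densities into normalizations of
`exp (-(2/ε) V (√ε y))`. Since `(2/ε) V (√ε y) → V''(0) y²` and `V x ≥ δ x² / 2` gives the
integrable bound `exp (-δ y²)`, dominated convergence makes these rescaled densities converge
in `L¹` to the Gaussian density `∝ exp (-V''(0) y²)`, which is the same for `V` and `V̂`.
The total variation distance is bounded by the `L¹` distance of the densities and does not
change under the rescaling.
-/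

open Topology

lemma tvDist_nonneg (P Q : Measure ℝ) : 0 ≤ tvDist P Q :=
  Real.iSup_nonneg fun _ => abs_nonneg _

lemma toReal_withDensity_ofReal_apply {μ : Measure ℝ} {f : ℝ → ℝ} (hf : Integrable f μ)
    (hf0 : 0 ≤ f) {A : Set ℝ} (hA : MeasurableSet A) :
    ((μ.withDensity fun x => ENNReal.ofReal (f x)) A).toReal = ∫ x in A, f x ∂μ := by
  rw [withDensity_apply _ hA,
    ← ofReal_integral_eq_lintegral_ofReal hf.integrableOn (ae_of_all _ hf0),
    ENNReal.toReal_ofReal (setIntegral_nonneg hA fun x _ => hf0 x)]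

lemma tvDist_withDensity_le_integral_abs_sub {μ : Measure ℝ} {p q : ℝ → ℝ}
    (hp : Integrable p μ) (hq : Integrable q μ) (hp0 : 0 ≤ p) (hq0 : 0 ≤ q) :
    tvDist (μ.withDensity fun x => ENNReal.ofReal (p x))
        (μ.withDensity fun x => ENNReal.ofReal (q x)) ≤ ∫ x, |p x - q x| ∂μ := by
  have : Nonempty {s : Set ℝ // MeasurableSet s} := ⟨⟨∅, .empty⟩⟩
  refine ciSup_le fun ⟨A, hA⟩ => ?_
  rw [toReal_withDensity_ofReal_apply hp hp0 hA, toReal_withDensity_ofReal_apply hq hq0 hA,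
    ← integral_sub hp.integrableOn hq.integrableOn]
  exact abs_integral_le_integral_abs.trans
    (setIntegral_le_integral (hp.sub hq).abs (ae_of_all _ fun _ => abs_nonneg _))

lemma integral_abs_sub_le_add {α : Type*} [MeasurableSpace α] {μ : Measure α} {p q r : α → ℝ}
    (hp : Integrable p μ) (hq : Integrable q μ) (hr : Integrable r μ) :
    ∫ x, |p x - q x| ∂μ ≤ ∫ x, |p x - r x| ∂μ + ∫ x, |q x - r x| ∂μ := by
  have hpr : Integrable (fun x => |p x - r x|) μ := (hp.sub hr).abs
  have hqr : Integrable (fun x => |q x - r x|) μ := (hq.sub hr).abs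
  rw [← integral_add hpr hqr]
  refine integral_mono (hp.sub hq).abs (hpr.add hqr) fun x => ?_
  simpa only [abs_sub_comm (r x)] using abs_sub_le (p x) (r x) (q x)

noncomputable def normalizedDensity (f : ℝ → ℝ) (x : ℝ) : ℝ := f x / ∫ z, f z

lemma normalizedDensity_nonneg {f : ℝ → ℝ} (hf : 0 ≤ f) : 0 ≤ normalizedDensity f :=
  fun x => div_nonneg (hf x) (integral_nonneg hf)

lemma normalizedDensity_comp_mul_left (f : ℝ → ℝ) (c y : ℝ) :
    normalizedDensity (fun y => f (c * y)) y = |c| * normalizedDensity f (c * y) := by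
  rw [normalizedDensity, normalizedDensity, Measure.integral_comp_mul_left, smul_eq_mul,
    abs_inv, mul_comm |c|⁻¹, ← div_div, div_inv_eq_mul, mul_comm]

lemma integral_abs_sub_normalizedDensity_comp_mul_left (f g : ℝ → ℝ) {c : ℝ} (hc : c ≠ 0) :
    ∫ y, |normalizedDensity (fun y => f (c * y)) y - normalizedDensity (fun y => g (c * y)) y|
      = ∫ x, |normalizedDensity f x - normalizedDensity g x| := by
  simp_rw [normalizedDensity_comp_mul_left _ c, ← mul_sub, abs_mul, abs_abs]
  rw [integral_const_mul,
    Measure.integral_comp_mul_left (fun x => |normalizedDensity f x - normalizedDensity g x|),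
    smul_eq_mul, ← mul_assoc, abs_inv, mul_inv_cancel₀ (abs_ne_zero.2 hc), one_mul]

lemma tvDist_normalizedDensity_le {f g r : ℝ → ℝ} {c : ℝ} (hc : c ≠ 0)
    (hf : Integrable fun y => f (c * y)) (hg : Integrable fun y => g (c * y))
    (hr : Integrable r) (hf0 : 0 ≤ f) (hg0 : 0 ≤ g) :
    tvDist (volume.withDensity fun x => ENNReal.ofReal (normalizedDensity f x))
        (volume.withDensity fun x => ENNReal.ofReal (normalizedDensity g x)) ≤
      (∫ y, |normalizedDensity (fun y => f (c * y)) y - normalizedDensity r y|) +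
        ∫ y, |normalizedDensity (fun y => g (c * y)) y - normalizedDensity r y| := by
  calc _ ≤ ∫ x, |normalizedDensity f x - normalizedDensity g x| :=
        tvDist_withDensity_le_integral_abs_sub
          (((integrable_comp_mul_left_iff f hc).1 hf).div_const _)
          (((integrable_comp_mul_left_iff g hc).1 hg).div_const _)
          (normalizedDensity_nonneg hf0) (normalizedDensity_nonneg hg0)
    _ = ∫ y, |normalizedDensity (fun y => f (c * y)) y -
          normalizedDensity (fun y => g (c * y)) y| :=
        (integral_abs_sub_normalizedDensity_comp_mul_left f g hc).symm
    _ ≤ _ := integral_abs_sub_le_add (hf.div_const _) (hg.div_const _) (hr.div_const _)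

lemma tendsto_integral_abs_sub_normalizedDensity {ι : Type*} {l : Filter ι}
    {F : ι → ℝ → ℝ} {f : ℝ → ℝ} (hF : ∀ᶠ i in l, Integrable (F i)) (hf : Integrable f)
    (hf0 : ∫ x, f x ≠ 0) (hlim : Tendsto (fun i => ∫ x, |F i x - f x|) l (𝓝 0)) :
    Tendsto (fun i => ∫ x, |normalizedDensity (F i) x - normalizedDensity f x|) l (𝓝 0) := by
  set N := fun i => ∫ x, F i x
  have hN : Tendsto N l (𝓝 (∫ x, f x)) := by
    rw [tendsto_iff_norm_sub_tendsto_zero]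
    refine squeeze_zero' (.of_forall fun _ => norm_nonneg _) ?_ hlim
    filter_upwards [hF] with i hi
    rw [Real.norm_eq_abs, ← integral_sub hi hf]
    exact abs_integral_le_integral_abs
  have hbound : Tendsto (fun i => |(N i)⁻¹| * (∫ x, |F i x - f x|) +
      |(N i)⁻¹ - (∫ x, f x)⁻¹| * ∫ x, |f x|) l (𝓝 0) := by
    have hNinv := hN.inv₀ hf0
    simpa using (hNinv.abs.mul hlim).add
      ((hNinv.sub (tendsto_const_nhds (x := (∫ x, f x)⁻¹))).abs.mul_const (∫ x, |f x|))
  refine squeeze_zero' (.of_forall fun _ => integral_nonneg fun _ => abs_nonneg _) ?_ hbound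
  filter_upwards [hF] with i hi
  have hpointwise : ∀ x, |normalizedDensity (F i) x - normalizedDensity f x| ≤
      |(N i)⁻¹| * |F i x - f x| + |(N i)⁻¹ - (∫ x, f x)⁻¹| * |f x| := fun x => by
    have hsplit : normalizedDensity (F i) x - normalizedDensity f x =
        (N i)⁻¹ * (F i x - f x) + ((N i)⁻¹ - (∫ x, f x)⁻¹) * f x := by
      simp only [normalizedDensity, N]
      ring
    rw [hsplit, ← abs_mul, ← abs_mul]
    exact abs_add_le _ _
  have hint₁ : Integrable fun x => |(N i)⁻¹| * |F i x - f x| := (hi.sub hf).abs.const_mul _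
  have hint₂ : Integrable fun x => |(N i)⁻¹ - (∫ x, f x)⁻¹| * |f x| := hf.abs.const_mul _
  calc ∫ x, |normalizedDensity (F i) x - normalizedDensity f x|
      ≤ ∫ x, (|(N i)⁻¹| * |F i x - f x| + |(N i)⁻¹ - (∫ x, f x)⁻¹| * |f x|) :=
        integral_mono ((hi.div_const _).sub (hf.div_const _)).abs (hint₁.add hint₂) hpointwise
    _ = _ := by rw [integral_add hint₁ hint₂, integral_const_mul, integral_const_mul]

section Potential

variable {V : ℝ → ℝ} {δ : ℝ}

lemma quadratic_le_of_le_deriv_deriv (hV : Differentiable ℝ V) (hV' : Differentiable ℝ (deriv V))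
    (hV0 : V 0 = 0) (hV'0 : deriv V 0 = 0) (hconv : ∀ x, δ ≤ deriv (deriv V) x) (x : ℝ) :
    δ / 2 * x ^ 2 ≤ V x := by
  set g : ℝ → ℝ := fun x => V x - δ / 2 * x ^ 2
  have hg : ∀ x, HasDerivAt g (deriv V x - δ * x) x := fun x =>
    ((hV x).hasDerivAt.sub ((hasDerivAt_pow 2 x).const_mul (δ / 2))).congr_deriv (by ring)
  have hg' : ∀ x, HasDerivAt (deriv g) (deriv (deriv V) x - δ) x := fun x => by
    rw [show deriv g = fun x => deriv V x - δ * x from funext fun x => (hg x).deriv]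
    exact ((hV' x).hasDerivAt.sub ((hasDerivAt_id x).const_mul δ)).congr_deriv (by ring)
  have hg_convex : ConvexOn ℝ Set.univ g := by
    refine MonotoneOn.convexOn_of_deriv convex_univ
      (fun x _ => (hg x).continuousAt.continuousWithinAt)
      (fun x _ => (hg x).differentiableAt.differentiableWithinAt) ?_
    refine (monotone_of_deriv_nonneg (fun x => (hg' x).differentiableAt) fun x => ?_).monotoneOn _
    rw [(hg' x).deriv, sub_nonneg]
    exact hconv x
  have hmin : IsMinOn g Set.univ 0 := by
    refine hg_convex.isMinOn_of_rightDeriv_eq_zero (by simp) ?_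
    rw [(hg 0).hasDerivWithinAt.derivWithin (uniqueDiffWithinAt_Ioi 0), hV'0, mul_zero, sub_zero]
  have := isMinOn_iff.1 hmin x trivial
  simp only [g, hV0] at this
  linarith

lemma tendsto_div_sq_of_deriv_eq_zero (hV : Differentiable ℝ V)
    (hV' : DifferentiableAt ℝ (deriv V) 0) (hV0 : V 0 = 0) (hV'0 : deriv V 0 = 0) :
    Tendsto (fun x => V x / x ^ 2) (𝓝[≠] 0) (𝓝 (deriv (deriv V) 0 / 2)) := by
  refine deriv.lhopital_zero_nhdsNE (.of_forall fun x => hV x) ?_ ?_ ?_ ?_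
  · filter_upwards [self_mem_nhdsWithin] with x (hx : x ≠ 0)
    simpa using hx
  · exact (hV.continuous.tendsto' 0 0 hV0).mono_left nhdsWithin_le_nhds
  · exact ((continuous_pow 2).tendsto' 0 0 (zero_pow two_ne_zero)).mono_left nhdsWithin_le_nhds
  · refine ((hasDerivAt_iff_tendsto_slope.mp hV'.hasDerivAt).div_const 2).congr' ?_
    filter_upwards [self_mem_nhdsWithin] with x (hx : x ≠ 0)
    simp only [slope_def_field, hV'0, deriv_pow_field]
    field_simp
    ring

lemma tendsto_two_div_mul_comp_sqrt_mul (hV : Differentiable ℝ V)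
    (hV' : DifferentiableAt ℝ (deriv V) 0) (hV0 : V 0 = 0) (hV'0 : deriv V 0 = 0) (y : ℝ) :
    Tendsto (fun ε => 2 / ε * V (√ε * y)) (𝓝[>] 0) (𝓝 (deriv (deriv V) 0 * y ^ 2)) := by
  rcases eq_or_ne y 0 with rfl | hy
  · simp [hV0]
  have hsqrt : Tendsto (fun ε => √ε * y) (𝓝[>] 0) (𝓝[≠] 0) := by
    refine tendsto_nhdsWithin_of_tendsto_nhds_of_eventually_within _ ?_ ?_
    · simpa using ((Real.continuous_sqrt.tendsto' 0 0 Real.sqrt_zero).mul_const y).mono_left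
        nhdsWithin_le_nhds
    · filter_upwards [self_mem_nhdsWithin] with ε (hε : 0 < ε)
      exact mul_ne_zero (Real.sqrt_pos.2 hε).ne' hy
  have hlim := ((tendsto_div_sq_of_deriv_eq_zero hV hV' hV0 hV'0).comp hsqrt).const_mul (2 * y ^ 2)
  rw [show 2 * y ^ 2 * (deriv (deriv V) 0 / 2) = deriv (deriv V) 0 * y ^ 2 by ring] at hlim
  refine hlim.congr' ?_
  filter_upwards [self_mem_nhdsWithin] with ε (hε : 0 < ε)
  simp only [Function.comp_apply, mul_pow, Real.sq_sqrt hε.le]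
  field_simp

lemma exp_neg_two_div_mul_comp_sqrt_mul_le (hquad : ∀ x, δ / 2 * x ^ 2 ≤ V x) {ε : ℝ}
    (hε : 0 < ε) (y : ℝ) :
    Real.exp (-(2 / ε) * V (√ε * y)) ≤ Real.exp (-δ * y ^ 2) := by
  rw [Real.exp_le_exp, neg_mul, neg_mul, neg_le_neg_iff]
  calc δ * y ^ 2 = 2 / ε * (δ / 2 * (√ε * y) ^ 2) := by
        rw [mul_pow, Real.sq_sqrt hε.le]
        field_simp
    _ ≤ 2 / ε * V (√ε * y) := by gcongr; exact hquad _

lemma integrable_exp_neg_two_div_mul_comp_sqrt_mul (hV : Continuous V) (hδ : 0 < δ)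
    (hquad : ∀ x, δ / 2 * x ^ 2 ≤ V x) {ε : ℝ} (hε : 0 < ε) :
    Integrable fun y => Real.exp (-(2 / ε) * V (√ε * y)) := by
  refine (integrable_exp_neg_mul_sq hδ).mono' (by fun_prop : Continuous _).aestronglyMeasurable
    (ae_of_all _ fun y => ?_)
  rw [Real.norm_of_nonneg (Real.exp_pos _).le]
  exact exp_neg_two_div_mul_comp_sqrt_mul_le hquad hε y

lemma tendsto_integral_abs_sub_gaussian (hV : Differentiable ℝ V)
    (hV' : Differentiable ℝ (deriv V)) (hV0 : V 0 = 0) (hV'0 : deriv V 0 = 0) (hδ : 0 < δ)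
    (hconv : ∀ x, δ ≤ deriv (deriv V) x) :
    Tendsto (fun ε => ∫ y, |Real.exp (-(2 / ε) * V (√ε * y)) -
        Real.exp (-deriv (deriv V) 0 * y ^ 2)|) (𝓝[>] 0) (𝓝 0) := by
  have hquad := quadratic_le_of_le_deriv_deriv hV hV' hV0 hV'0 hconv
  have hcont := hV.continuous
  have hbound : ∀ᶠ ε in 𝓝[>] 0, ∀ᵐ y, ‖|Real.exp (-(2 / ε) * V (√ε * y)) -
      Real.exp (-deriv (deriv V) 0 * y ^ 2)|‖ ≤ 2 * Real.exp (-δ * y ^ 2) := by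
    filter_upwards [self_mem_nhdsWithin] with ε (hε : 0 < ε)
    refine ae_of_all _ fun y => ?_
    have hgauss : Real.exp (-deriv (deriv V) 0 * y ^ 2) ≤ Real.exp (-δ * y ^ 2) :=
      Real.exp_le_exp.2 (by nlinarith [hconv 0, sq_nonneg y])
    rw [Real.norm_eq_abs, abs_abs, two_mul]
    exact (abs_sub _ _).trans (by
      rw [abs_of_pos (Real.exp_pos _), abs_of_pos (Real.exp_pos _)]
      exact add_le_add (exp_neg_two_div_mul_comp_sqrt_mul_le hquad hε y) hgauss)
  have hpointwise : ∀ y, Tendsto (fun ε => |Real.exp (-(2 / ε) * V (√ε * y)) -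
      Real.exp (-deriv (deriv V) 0 * y ^ 2)|) (𝓝[>] 0) (𝓝 0) := fun y => by
    have hexp := (tendsto_two_div_mul_comp_sqrt_mul hV (hV' 0) hV0 hV'0 y).neg.rexp
    convert (hexp.sub_const (Real.exp (-(deriv (deriv V) 0 * y ^ 2)))).abs using 2 <;> simp
  simpa using tendsto_integral_filter_of_dominated_convergence (f := fun _ => 0) _
    (.of_forall fun ε => (by fun_prop : Continuous _).aestronglyMeasurable) hbound
    ((integrable_exp_neg_mul_sq hδ).const_mul 2) (ae_of_all _ hpointwise)

lemma tendsto_integral_abs_sub_normalizedDensity_gaussian (hV : Differentiable ℝ V)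
    (hV' : Differentiable ℝ (deriv V)) (hV0 : V 0 = 0) (hV'0 : deriv V 0 = 0) (hδ : 0 < δ)
    (hconv : ∀ x, δ ≤ deriv (deriv V) x) :
    Tendsto (fun ε => ∫ y, |normalizedDensity (fun y => Real.exp (-(2 / ε) * V (√ε * y))) y -
        normalizedDensity (fun y => Real.exp (-deriv (deriv V) 0 * y ^ 2)) y|) (𝓝[>] 0) (𝓝 0) := by
  have hgauss := integrable_exp_neg_mul_sq (hδ.trans_le (hconv 0))
  refine tendsto_integral_abs_sub_normalizedDensity ?_ hgauss
    (integral_exp_pos (f := fun y => -deriv (deriv V) 0 * y ^ 2) hgauss).ne'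
    (tendsto_integral_abs_sub_gaussian hV hV' hV0 hV'0 hδ hconv)
  filter_upwards [self_mem_nhdsWithin] with ε (hε : 0 < ε)
  exact integrable_exp_neg_two_div_mul_comp_sqrt_mul hV.continuous hδ
    (quadratic_le_of_le_deriv_deriv hV hV' hV0 hV'0 hconv) hε

end Potential

theorem gibbs_measures_tendsto_same_general
    (V W : ℝ → ℝ) (δ δ' : ℝ)
    (hV : ContDiff ℝ 3 V)
    (hV0 : V 0 = 0)
    (hVcrit : ∀ x : ℝ, deriv V x = 0 ↔ x = 0)
    (hδ : 0 < δ)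
    (hVconvex : ∀ x : ℝ, δ ≤ deriv (deriv V) x)
    (hW : ContDiff ℝ 3 W)
    (hW0 : W 0 = 0)
    (hWcrit : ∀ x : ℝ, deriv W x = 0 ↔ x = 0)
    (hδ' : 0 < δ')
    (hWconvex : ∀ x : ℝ, δ' ≤ deriv (deriv W) x)
    (hsecond : deriv (deriv W) 0 = deriv (deriv V) 0) :
    Tendsto
      (fun ε : ℝ =>
        tvDist
          (volume.withDensity fun x : ℝ =>
            ENNReal.ofReal
              (Real.exp (-(2 / ε) * V x) / ∫ z : ℝ, Real.exp (-(2 / ε) * V z)))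
          (volume.withDensity fun x : ℝ =>
            ENNReal.ofReal
              (Real.exp (-(2 / ε) * W x) / ∫ z : ℝ, Real.exp (-(2 / ε) * W z))))
      (nhdsWithin 0 (Set.Ioi 0)) (nhds 0) := by
  have hV₁ : Differentiable ℝ V := hV.differentiable (by norm_num)
  have hV₂ : Differentiable ℝ (deriv V) := (hV.deriv' (n := 2)).differentiable (by norm_num)
  have hW₁ : Differentiable ℝ W := hW.differentiable (by norm_num)
  have hW₂ : Differentiable ℝ (deriv W) := (hW.deriv' (n := 2)).differentiable (by norm_num)
  have hV'0 : deriv V 0 = 0 := (hVcrit 0).2 rfl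
  have hW'0 : deriv W 0 = 0 := (hWcrit 0).2 rfl
  have hWlim := tendsto_integral_abs_sub_normalizedDensity_gaussian hW₁ hW₂ hW0 hW'0 hδ' hWconvex
  rw [hsecond] at hWlim
  refine squeeze_zero' (.of_forall fun _ => tvDist_nonneg _ _) ?_ (by simpa only [add_zero] using
    (tendsto_integral_abs_sub_normalizedDensity_gaussian hV₁ hV₂ hV0 hV'0 hδ hVconvex).add hWlim)
  filter_upwards [self_mem_nhdsWithin] with ε (hε : 0 < ε)
  exact tvDist_normalizedDensity_le (f := fun x => Real.exp (-(2 / ε) * V x))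
    (g := fun x => Real.exp (-(2 / ε) * W x)) (Real.sqrt_pos.2 hε).ne'
    (integrable_exp_neg_two_div_mul_comp_sqrt_mul hV₁.continuous hδ
      (quadratic_le_of_le_deriv_deriv hV₁ hV₂ hV0 hV'0 hVconvex) hε)
    (integrable_exp_neg_two_div_mul_comp_sqrt_mul hW₁.continuous hδ'
      (quadratic_le_of_le_deriv_deriv hW₁ hW₂ hW0 hW'0 hWconvex) hε)
    (integrable_exp_neg_mul_sq (hδ.trans_le (hVconvex 0)))
    (fun _ => (Real.exp_pos _).le) (fun _ => (Real.exp_pos _).le)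

/-- If `V` is a coercive regular potential and `V̂` is a smooth
coercive regular potential with `V̂''(0) = V''(0)`, then the total variation distance
between the Gibbs measures `μ^ε(dx) = e^{-(2/ε)V(x)}dx / M^ε` and
`μ̂^ε(dx) = e^{-(2/ε)V̂(x)}dx / M̂^ε` tends to `0` as `ε → 0⁺`. -/
theorem gibbs_measures_tendsto_same
    (V W : ℝ → ℝ) (δ δ' : ℝ)
    (hV : ContDiff ℝ 3 V)
    (hV0 : V 0 = 0)
    (hVcrit : ∀ x : ℝ, deriv V x = 0 ↔ x = 0)
    (hV''0 : 0 < deriv (deriv V) 0)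
    (hVcoercive : Tendsto V (Filter.cocompact ℝ) atTop)
    (hδ : 0 < δ)
    (hVconvex : ∀ x : ℝ, δ ≤ deriv (deriv V) x)
    (hW : ContDiff ℝ 3 W)
    (hW0 : W 0 = 0)
    (hWcrit : ∀ x : ℝ, deriv W x = 0 ↔ x = 0)
    (hW''0 : 0 < deriv (deriv W) 0)
    (hWcoercive : Tendsto W (Filter.cocompact ℝ) atTop)
    (hδ' : 0 < δ')
    (hWconvex : ∀ x : ℝ, δ' ≤ deriv (deriv W) x)
    (hWbdd2 : BddAbove (Set.range fun x : ℝ => |deriv (deriv W) x|))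
    (hWbdd3 : BddAbove (Set.range fun x : ℝ => |deriv (deriv (deriv W)) x|))
    (hsecond : deriv (deriv W) 0 = deriv (deriv V) 0) :
    Tendsto
      (fun ε : ℝ =>
        tvDist
          (volume.withDensity fun x : ℝ =>
            ENNReal.ofReal
              (Real.exp (-(2 / ε) * V x) / ∫ z : ℝ, Real.exp (-(2 / ε) * V z)))
          (volume.withDensity fun x : ℝ =>
            ENNReal.ofReal
              (Real.exp (-(2 / ε) * W x) / ∫ z : ℝ, Real.exp (-(2 / ε) * W z))))
      (nhdsWithin 0 (Set.Ioi 0)) (nhds 0) :=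
  gibbs_measures_tendsto_same_general V W δ δ' hV hV0 hVcrit hδ hVconvex hW hW0 hWcrit hδ' hWconvex
    hsecond
end
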